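/- arXiv:1811.08132 — 12 statements merged into one kernel-verified Lean document; each statement's English description precedes it below -/
import Mathlib

section
/- Let f : A → B with |A| = n, |f(A)| = m, and write n = km + ε with 0 ≤ ε < m. Let λ̄ = (1/(n-1)) Σ_{α≠0} λ_α, where λ_α = |{x ∈ A : f(x+α) = f(x)}|. Then λ̄ ≥ (n-ε)(n+ε-m)/(m(n-1)), with equality if and only if exactly m-ε elements of B = f(A) have preimage size k and the other ε have preimage size k+1. -/
open Finset

lemma aux_key {B : Type*} [DecidableEq B] (s : Finset B) (c : B → ℕ) (m k ε : ℕ)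
    (hε : ε < m) (hcard : s.card = m) (hsum : ∑ b ∈ s, c b = k * m + ε) :
    k ^ 2 * m + 2 * k * ε + ε ≤ ∑ b ∈ s, c b ^ 2 ∧
    ((∑ b ∈ s, c b ^ 2) = k ^ 2 * m + 2 * k * ε + ε ↔
      (s.filter fun b => c b = k).card = m - ε ∧ (s.filter fun b => c b = k + 1).card = ε) := by
  have hg : ∀ b ∈ s, (0:ℤ) ≤ ((c b : ℤ) - k) * ((c b : ℤ) - (k+1)) := by
    intro b _
    rcases le_or_gt (c b) k with h | h
    · have h1 : (c b : ℤ) ≤ k := by exact_mod_cast h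
      nlinarith
    · have h1 : (k:ℤ) + 1 ≤ c b := by exact_mod_cast h
      nlinarith
  have hsumg : ∑ b ∈ s, ((c b : ℤ) - k) * ((c b : ℤ) - (k+1))
      = (∑ b ∈ s, (c b : ℤ)^2) - (k^2*m + 2*k*ε + ε) := by
    have h1 : ∑ b ∈ s, (c b : ℤ) = k*m+ε := by exact_mod_cast hsum
    have h2 : (s.card : ℤ) = m := by exact_mod_cast hcard
    have he : ∀ b ∈ s, ((c b : ℤ) - k) * ((c b : ℤ) - (k+1))
        = (c b : ℤ)^2 - (2*k+1)*(c b : ℤ) + k*(k+1) := by intro b _; ring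
    rw [Finset.sum_congr rfl he, Finset.sum_add_distrib, Finset.sum_sub_distrib,
      ← Finset.mul_sum, Finset.sum_const, h1, nsmul_eq_mul, h2]
    ring
  have hineq : k ^ 2 * m + 2 * k * ε + ε ≤ ∑ b ∈ s, c b ^ 2 := by
    have h0 := Finset.sum_nonneg hg
    rw [hsumg] at h0
    have h1 : (k^2*m + 2*k*ε + ε : ℤ) ≤ ∑ b ∈ s, (c b:ℤ)^2 := by linarith
    exact_mod_cast h1
  refine ⟨hineq, ?_⟩
  have hzero : ((∑ b ∈ s, c b ^ 2) = k ^ 2 * m + 2 * k * ε + ε) ↔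
      ∀ b ∈ s, c b = k ∨ c b = k + 1 := by
    constructor
    · intro h
      have hQ : (∑ b ∈ s, (c b:ℤ) ^ 2) = k ^ 2 * m + 2 * k * ε + ε := by exact_mod_cast h
      have hz : ∑ b ∈ s, ((c b : ℤ) - k) * ((c b : ℤ) - (k+1)) = 0 := by
        rw [hsumg, hQ]; ring
      intro b hb
      have hb0 := (Finset.sum_eq_zero_iff_of_nonneg hg).mp hz b hb
      rcases mul_eq_zero.mp hb0 with h' | h'
      · left
        have : (c b : ℤ) = k := by linarith
        exact_mod_cast this
      · right
        have : (c b : ℤ) = k+1 := by linarith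
        exact_mod_cast this
    · intro h
      have hz : ∑ b ∈ s, ((c b : ℤ) - k) * ((c b : ℤ) - (k+1)) = 0 :=
        Finset.sum_eq_zero (by
          intro b hb; rcases h b hb with h'|h' <;> rw [h'] <;> push_cast <;> ring)
      rw [hsumg] at hz
      have : (∑ b ∈ s, (c b:ℤ) ^ 2) = k ^ 2 * m + 2 * k * ε + ε := by linarith
      exact_mod_cast this
  rw [hzero]
  have hdisj : Disjoint (s.filter fun b => c b = k) (s.filter fun b => c b = k+1) := by
    rw [Finset.disjoint_left]
    intro a h1 h2
    simp only [Finset.mem_filter] at h1 h2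
    omega
  constructor
  · intro h
    have hun : (s.filter fun b => c b = k) ∪ (s.filter fun b => c b = k+1) = s := by
      ext b
      simp only [Finset.mem_union, Finset.mem_filter]
      constructor
      · tauto
      · intro hb; rcases h b hb with h'|h' <;> tauto
    have hcards : (s.filter fun b => c b = k).card + (s.filter fun b => c b = k+1).card = m := by
      rw [← Finset.card_union_of_disjoint hdisj, hun, hcard]
    have e1 : ∑ b ∈ s.filter (fun b => c b = k), c b
        = (s.filter fun b => c b = k).card * k := by
      rw [Finset.sum_congr rfl (fun b hb => (Finset.mem_filter.mp hb).2), Finset.sum_const,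
        smul_eq_mul]
    have e2 : ∑ b ∈ s.filter (fun b => c b = k+1), c b
        = (s.filter fun b => c b = k+1).card * (k+1) := by
      rw [Finset.sum_congr rfl (fun b hb => (Finset.mem_filter.mp hb).2), Finset.sum_const,
        smul_eq_mul]
    have hsplit : ∑ b ∈ s, c b
        = (s.filter fun b => c b = k).card * k + (s.filter fun b => c b = k+1).card * (k+1) := by
      rw [← e1, ← e2, ← Finset.sum_union hdisj, hun]
    set a1 := (s.filter fun b => c b = k).card
    set a2 := (s.filter fun b => c b = k+1).card
    have hkey : a1 * k + a2 * (k+1) = k * (a1 + a2) + a2 := by ring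
    rw [hsum, hkey, hcards] at hsplit
    omega
  · intro ⟨h1, h2⟩
    have hsub : (s.filter fun b => c b = k) ∪ (s.filter fun b => c b = k+1) ⊆ s :=
      Finset.union_subset (Finset.filter_subset _ _) (Finset.filter_subset _ _)
    have hcardu : ((s.filter fun b => c b = k) ∪ (s.filter fun b => c b = k+1)).card = m := by
      rw [Finset.card_union_of_disjoint hdisj, h1, h2]; omega
    have hequ : (s.filter fun b => c b = k) ∪ (s.filter fun b => c b = k+1) = s :=
      Finset.eq_of_subset_of_card_le hsub (by rw [hcardu, hcard])
    intro b hb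
    rw [← hequ] at hb
    simp only [Finset.mem_union, Finset.mem_filter] at hb
    tauto

theorem stmt1 {A B : Type*} [AddCommGroup A] [Fintype A] [DecidableEq A]
    [Fintype B] [DecidableEq B] (f : A → B)
    (n m k ε : ℕ) (hn : n = Fintype.card A) (hn2 : 2 ≤ n)
    (hm : m = (univ.image f).card) (hε : ε < m) (hkm : n = k * m + ε)
    (lamBar : ℚ)
    (hlam : lamBar = (∑ α ∈ univ.filter (fun α : A => α ≠ 0),
        ((univ.filter fun x => f (x + α) = f x).card : ℚ)) / ((n : ℚ) - 1)) :
    lamBar ≥ ((n : ℚ) - ε) * ((n : ℚ) + ε - m) / (m * ((n : ℚ) - 1)) ∧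
      (lamBar = ((n : ℚ) - ε) * ((n : ℚ) + ε - m) / (m * ((n : ℚ) - 1)) ↔
        ((univ.image f).filter fun b => (univ.filter fun x => f x = b).card = k).card = m - ε ∧
        ((univ.image f).filter fun b => (univ.filter fun x => f x = b).card = k + 1).card = ε) := by
  classical
  set s : Finset B := univ.image f with hs
  set c : B → ℕ := fun b => (univ.filter fun x => f x = b).card with hc
  have hcm : s.card = m := hm.symm
  have hfibsum : ∑ b ∈ s, c b = k * m + ε := by
    have h := Finset.card_eq_sum_card_image f (univ : Finset A)
    rw [Finset.card_univ, ← hn, hkm] at h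
    exact h.symm
  have hfib : ∀ x : A, (univ.filter fun α : A => f (x + α) = f x).card = c (f x) := by
    intro x
    apply Finset.card_equiv (Equiv.addLeft x)
    intro α
    simp [Equiv.addLeft]
  have key : ∑ α : A, (univ.filter fun x => f (x + α) = f x).card = ∑ b ∈ s, c b ^ 2 := by
    calc ∑ α : A, (univ.filter fun x => f (x + α) = f x).card
        = ∑ α : A, ∑ x : A, (if f (x + α) = f x then 1 else 0) := by
          refine Finset.sum_congr rfl fun α _ => ?_
          rw [Finset.card_filter]
      _ = ∑ x : A, ∑ α : A, (if f (x + α) = f x then 1 else 0) := Finset.sum_comm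
      _ = ∑ x : A, (univ.filter fun α => f (x + α) = f x).card := by
          refine Finset.sum_congr rfl fun x _ => ?_
          rw [Finset.card_filter]
      _ = ∑ x : A, c (f x) := Finset.sum_congr rfl fun x _ => hfib x
      _ = ∑ b ∈ univ.image f, (univ.filter fun x => f x = b).card • c b := Finset.sum_comp c f
      _ = ∑ b ∈ s, c b ^ 2 := by
          refine Finset.sum_congr rfl fun b _ => ?_
          rw [smul_eq_mul, sq]
  have hzf : (univ.filter fun α : A => ¬ α ≠ 0) = ({0} : Finset A) := by
    ext a; simp
  have h0sum : ∑ α ∈ ({0} : Finset A), (univ.filter fun x => f (x + α) = f x).card = n := by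
    rw [Finset.sum_singleton]
    have : (univ.filter fun x : A => f (x + 0) = f x) = univ := by
      ext x; simp
    rw [this, Finset.card_univ, hn]
  have hsplit : (∑ α ∈ univ.filter (fun α : A => α ≠ 0),
      (univ.filter fun x => f (x + α) = f x).card) + n = ∑ b ∈ s, c b ^ 2 := by
    rw [← key]
    have h := Finset.sum_filter_add_sum_filter_not (univ : Finset A) (fun α => α ≠ 0)
      (fun α => (univ.filter fun x => f (x + α) = f x).card)
    rw [hzf, h0sum] at h
    exact h
  obtain ⟨hineqN, hiffN⟩ := aux_key s c m k ε hε hcm hfibsum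
  have hn1 : (1:ℚ) < (n:ℚ) := by exact_mod_cast lt_of_lt_of_le one_lt_two hn2
  have hden : (0:ℚ) < (n:ℚ) - 1 := by linarith
  have hm0 : (0:ℚ) < (m:ℚ) := by
    have : 0 < m := lt_of_le_of_lt (Nat.zero_le ε) hε
    exact_mod_cast this
  have hq : (n:ℚ) = (k:ℚ)*(m:ℚ)+(ε:ℚ) := by exact_mod_cast hkm
  have hSQ : ((k:ℚ)^2*(m:ℚ) + 2*(k:ℚ)*(ε:ℚ) + (ε:ℚ)) ≤ ((∑ b ∈ s, c b ^ 2 : ℕ) : ℚ) := by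
    exact_mod_cast hineqN
  have hlam' : lamBar = (((∑ b ∈ s, c b ^ 2 : ℕ) : ℚ) - (n:ℚ))/((n:ℚ)-1) := by
    rw [hlam]
    congr 1
    have h3 : ((∑ α ∈ univ.filter (fun α : A => α ≠ 0),
        (univ.filter fun x => f (x + α) = f x).card : ℕ) : ℚ) + (n:ℚ)
        = ((∑ b ∈ s, c b ^ 2 : ℕ) : ℚ) := by exact_mod_cast hsplit
    push_cast at h3
    push_cast
    linarith
  have hstep : ((n:ℚ)-(ε:ℚ))*((n:ℚ)+(ε:ℚ)-(m:ℚ)) * ((n:ℚ)-1)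
      = (((k:ℚ)^2*(m:ℚ)+2*(k:ℚ)*(ε:ℚ)+(ε:ℚ)) - (n:ℚ))*((m:ℚ)*((n:ℚ)-1)) := by
    rw [hq]; ring
  constructor
  · rw [hlam', ge_iff_le, div_le_div_iff₀ (by positivity) hden, hstep]
    have hle : (((k:ℚ)^2*(m:ℚ)+2*(k:ℚ)*(ε:ℚ)+(ε:ℚ)) - (n:ℚ))
        ≤ ((∑ b ∈ s, c b ^ 2 : ℕ) : ℚ) - (n:ℚ) := by linarith
    exact mul_le_mul_of_nonneg_right hle (by positivity)
  · rw [hlam', div_eq_div_iff (ne_of_gt hden) (by positivity : (m:ℚ)*((n:ℚ)-1) ≠ 0), ← hiffN]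
    constructor
    · intro h
      have h2 : ((∑ b ∈ s, c b ^ 2 : ℕ) : ℚ) * ((m:ℚ)*((n:ℚ)-1))
          = ((k:ℚ)^2*(m:ℚ)+2*(k:ℚ)*(ε:ℚ)+(ε:ℚ)) * ((m:ℚ)*((n:ℚ)-1)) := by
        linear_combination h + hstep
      have h3 := mul_right_cancel₀ (by positivity : (m:ℚ)*((n:ℚ)-1) ≠ 0) h2
      exact_mod_cast h3
    · intro h
      have h3 : ((∑ b ∈ s, c b ^ 2 : ℕ) : ℚ) = (k:ℚ)^2*(m:ℚ)+2*(k:ℚ)*(ε:ℚ)+(ε:ℚ) := by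
        exact_mod_cast h
      linear_combination ((m:ℚ)*((n:ℚ)-1))*h3 - hstep
end

section
/- Let f : A → B be an (n, m, S) zero-difference function with λ = max S and μ = min S, and let r_b = |f^{-1}(b)| for b ∈ f(A). Then for every b ∈ f(A), (n - √Δ)/m ≤ r_b ≤ (n + √Δ)/m, where Δ = (n + λn - λ)m² - (n² + n + μn - μ)m + n². -/
open Finset

theorem stmt2 {A B : Type*} [AddCommGroup A] [Fintype A] [DecidableEq A]
    [Fintype B] [DecidableEq B] (f : A → B)
    (n m lam mu : ℕ) (hn : n = Fintype.card A) (hn2 : 2 ≤ n)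
    (hm : m = (univ.image f).card)
    (S : Finset ℕ)
    (hS : S = (univ.filter (fun α : A => α ≠ 0)).image
        (fun α => (univ.filter fun x => f (x + α) = f x).card))
    (hSne : S.Nonempty)
    (hlam : lam = S.max' hSne) (hmu : mu = S.min' hSne)
    (Δ : ℝ)
    (hΔ : Δ = ((n : ℝ) + lam * n - lam) * m ^ 2
        - ((n : ℝ) ^ 2 + n + mu * n - mu) * m + (n : ℝ) ^ 2) :
    ∀ b ∈ univ.image f,
      ((n : ℝ) - Real.sqrt Δ) / m ≤ ((univ.filter fun x => f x = b).card : ℝ) ∧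
      ((univ.filter fun x => f x = b).card : ℝ) ≤ ((n : ℝ) + Real.sqrt Δ) / m := by
  intro b hb
  set I : Finset B := univ.image f with hI
  set R : B → ℕ := fun b => (univ.filter fun x => f x = b).card with hR
  set L : A → ℕ := fun α => (univ.filter fun x => f (x + α) = f x).card with hL
  -- m ≥ 1
  have hmpos : 0 < m := by
    rw [hm]; exact card_pos.mpr ⟨b, hb⟩
  -- sum of fibers is n
  have h1 : ∑ c ∈ I, R c = n := by
    rw [hn, ← card_univ]
    exact (card_eq_sum_card_fiberwise (fun x _ => mem_image_of_mem f (mem_univ x))).symm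
  -- double counting
  have h2 : ∑ α : A, L α = ∑ c ∈ I, R c * R c := by
    have lhs : ∑ α : A, L α = ∑ x : A, R (f x) := by
      simp only [hL, hR, card_filter]
      rw [Finset.sum_comm]
      refine Finset.sum_congr rfl fun x _ => ?_
      exact Fintype.sum_equiv (Equiv.addLeft x) _ _ (fun α => rfl)
    rw [lhs, ← Finset.sum_fiberwise_of_maps_to (g := f) (fun x _ => mem_image_of_mem f (mem_univ x))]
    refine Finset.sum_congr rfl fun c _ => ?_
    rw [Finset.sum_congr rfl (fun x hx => by
      rw [(mem_filter.mp hx).2]), Finset.sum_const, smul_eq_mul]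
  -- split off α = 0
  have h0 : L 0 = n := by
    simp only [hL, add_zero]
    simp [hn, card_univ]
  have hsplit : L 0 + ∑ α ∈ univ.filter (fun α : A => α ≠ 0), L α = ∑ α : A, L α := by
    rw [Finset.filter_ne']
    exact Finset.add_sum_erase univ L (mem_univ 0)
  -- each L α on nonzero α is in S
  have hmem : ∀ α ∈ univ.filter (fun α : A => α ≠ 0), L α ∈ S := by
    intro α hα
    rw [hS]
    exact mem_image_of_mem _ hα
  have hcardne : (univ.filter (fun α : A => α ≠ 0)).card = n - 1 := by
    rw [Finset.filter_ne', card_erase_of_mem (mem_univ 0), card_univ, hn]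
  have h4 : ∑ α ∈ univ.filter (fun α : A => α ≠ 0), L α ≤ (n - 1) * lam := by
    rw [← hcardne]
    have := Finset.sum_le_card_nsmul (univ.filter (fun α : A => α ≠ 0)) L lam
      (fun α hα => hlam ▸ S.le_max' _ (hmem α hα))
    simpa using this
  have hQ : ∑ c ∈ I, R c * R c ≤ n + (n - 1) * lam := by
    rw [← h2, ← hsplit, h0]
    exact Nat.add_le_add_left h4 n
  -- pass to reals
  have hn1 : (1 : ℕ) ≤ n := le_trans (by norm_num) hn2
  have hQR : ∑ c ∈ I, (R c : ℝ) ^ 2 ≤ (n : ℝ) + ((n : ℝ) - 1) * lam := by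
    have := (Nat.cast_le (α := ℝ)).mpr hQ
    push_cast [Nat.cast_sub hn1] at this
    simpa [sq] using this
  have hsumR : ∑ c ∈ I, (R c : ℝ) = n := by
    rw [← h1]; push_cast; rfl
  -- Cauchy-Schwarz on I.erase b
  have hcs : ((n : ℝ) - R b) ^ 2 ≤ ((m : ℝ) - 1) * ((∑ c ∈ I, (R c : ℝ) ^ 2) - (R b : ℝ) ^ 2) := by
    have hb' : b ∈ I := hb
    have e1 : ∑ c ∈ I.erase b, (R c : ℝ) = (n : ℝ) - R b := by
      rw [← hsumR, Finset.sum_erase_eq_sub hb']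
    have e2 : ∑ c ∈ I.erase b, (R c : ℝ) ^ 2
        = (∑ c ∈ I, (R c : ℝ) ^ 2) - (R b : ℝ) ^ 2 := by
      rw [Finset.sum_erase_eq_sub hb']
    have e3 : ((I.erase b).card : ℝ) = (m : ℝ) - 1 := by
      rw [card_erase_of_mem hb', hm]
      have : 1 ≤ I.card := card_pos.mpr ⟨b, hb⟩
      push_cast [Nat.cast_sub this]
      ring
    have := sq_sum_le_card_mul_sum_sq (s := I.erase b) (f := fun c => (R c : ℝ))
    rw [e1, e2, e3] at this
    exact this
  have hmulam : (mu : ℝ) ≤ (lam : ℝ) := by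
    have : mu ≤ lam := by
      rw [hmu, hlam]; exact S.min'_le _ (S.max'_mem hSne)
    exact_mod_cast this
  -- key inequality
  have hkey : ((m : ℝ) * R b - n) ^ 2 ≤ Δ := by
    have hm1 : (1 : ℝ) ≤ (m : ℝ) := by exact_mod_cast hmpos
    have hn2' : (2 : ℝ) ≤ (n : ℝ) := by exact_mod_cast hn2
    have hlam0 : (0 : ℝ) ≤ lam := Nat.cast_nonneg _
    nlinarith [mul_le_mul_of_nonneg_left hcs (le_trans zero_le_one hm1),
      mul_le_mul_of_nonneg_left hQR (mul_nonneg (le_trans zero_le_one hm1)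
        (mul_nonneg (le_trans zero_le_one hm1) (by linarith : (0:ℝ) ≤ (m:ℝ) - 1))),
      mul_nonneg (mul_nonneg (le_trans zero_le_one hm1) (by linarith : (0:ℝ) ≤ (n:ℝ) - 1))
        (by linarith : (0:ℝ) ≤ (lam : ℝ) - mu),
      sq_nonneg ((m : ℝ) * R b - n)]
  have hΔ0 : 0 ≤ Δ := le_trans (sq_nonneg _) hkey
  have habs : |(m : ℝ) * R b - n| ≤ Real.sqrt Δ := by
    rw [← Real.sqrt_sq_eq_abs]
    exact Real.sqrt_le_sqrt hkey
  rw [abs_le] at habs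
  have hmR : (0 : ℝ) < m := by exact_mod_cast hmpos
  constructor
  · rw [div_le_iff₀ hmR]
    have := habs.1
    linarith [this]
  · rw [le_div_iff₀ hmR]
    linarith [habs.2]
end

section
/- Let (R, +, ×) be a finite ring with identity of characteristic p ≠ 2, and G a subgroup of the group of units of R of even order k, satisfying (G - 1) \ {0} ⊆ R^×. If α ∈ G has multiplicative order 2, then α = -1. -/
theorem stmt4 {R : Type*} [Ring R] [Fintype R] (p : ℕ) [CharP R p] (hp : p ≠ 2)
    (G : Subgroup Rˣ) (k : ℕ) (hk : k = Nat.card G) (hke : Even k)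
    (hG : ∀ g ∈ G, ((g : R) - 1 ≠ 0) → IsUnit ((g : R) - 1))
    (α : Rˣ) (hα : α ∈ G) (ho : orderOf α = 2) : α = -1 := by
  have hsq : α ^ 2 = 1 := by rw [← ho]; exact pow_orderOf_eq_one α
  have hsqR : (α : R) ^ 2 = 1 := by
    have := congrArg (Units.val) hsq
    simpa using this
  have hne1 : α ≠ 1 := by
    intro h
    rw [h, orderOf_one] at ho
    exact absurd ho (by norm_num)
  have hne : (α : R) - 1 ≠ 0 := by
    intro h
    apply hne1
    ext
    simpa using sub_eq_zero.mp h
  have hu : IsUnit ((α : R) - 1) := hG α hα hne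
  have hmul : ((α : R) - 1) * ((α : R) + 1) = 0 := by
    have h : ((α : R) - 1) * ((α : R) + 1) = (α : R) ^ 2 - 1 := by noncomm_ring
    rw [h, hsqR, sub_self]
  have h0 : (α : R) + 1 = 0 := (hu.mul_right_eq_zero).mp hmul
  ext
  simpa using eq_neg_of_add_eq_zero_left h0
end

section
/- Let f : R → Z_m be the ZDB function f_G of Proposition 1 (defined by the partition of R into sets rG), where R is a finite ring of order n, G ≤ R^× with |G| = k satisfies (G-1)\{0} ⊆ R^×, and m = (n-1)/k + 1. Define f_G^0(x) = f_G(x) for x ≠ 0 and f_G^0(0) = f_G(1). If (n-1)/k ≥ 2 and -1 ∈ G, then f_G^0 is an (n, (n-1)/k, {k-1, k+1}) zero-difference function: for every nonzero a ∈ R, |{x : f_G^0(x+a) = f_G^0(x)}| equals k+1 if a ∈ G and k-1 otherwise. -/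
open Finset

open scoped Classical in
theorem stmt7 {R : Type*} [Ring R] [Fintype R] [DecidableEq R]
    {B : Type*} [DecidableEq B]
    (G : Subgroup Rˣ) (n k : ℕ) (hn : n = Fintype.card R) (hk : k = Nat.card G)
    (hcond : ∀ g ∈ G, ((g : R) - 1 ≠ 0) → IsUnit ((g : R) - 1))
    (hdvd : k ∣ n - 1) (hm : 2 ≤ (n - 1) / k) (h1 : (-1 : Rˣ) ∈ G)
    (f : R → B)
    (hf : ∀ x y : R, f x = f y ↔ ∃ g ∈ G, x = y * (g : R))
    (f0 : R → B) (hf0 : ∀ x, f0 x = if x = 0 then f 1 else f x) :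
    ∀ a : R, a ≠ 0 →
      (univ.filter fun x => f0 (x + a) = f0 x).card
        = if ∃ g ∈ G, a = (g : R) then k + 1 else k - 1 := by
  intro a ha
  have hk1 : 1 ≤ k := by
    rw [hk]
    have : (0:ℕ) < Nat.card G := Nat.card_pos
    omega
  have hcond' : ∀ g : Rˣ, g ∈ G → g ≠ 1 → IsUnit ((g:R) - 1) := by
    intro g hg hg1
    refine hcond g hg (fun h => hg1 ?_)
    rw [sub_eq_zero] at h
    exact Units.val_eq_one.mp h
  set S : Finset R := univ.filter fun x => f (x + a) = f x with hS
  set T : Finset Rˣ := univ.filter (fun g => g ∈ G ∧ g ≠ 1) with hT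
  have hTcard : T.card = k - 1 := by
    have h1T : T = (univ.filter (fun g : Rˣ => g ∈ G)).erase 1 := by
      ext g
      simp only [hT, mem_filter, mem_univ, true_and, mem_erase, and_comm]
    rw [h1T, card_erase_of_mem (by simp [G.one_mem])]
    congr 1
    rw [hk, Nat.card_eq_fintype_card]
    simp [Fintype.card_subtype]
  have hSimg : S = T.image (fun g : Rˣ => a * Ring.inverse ((g:R) - 1)) := by
    ext x
    simp only [hS, hT, mem_filter, mem_univ, true_and, mem_image]
    constructor
    · intro hx
      obtain ⟨g, hg, hxg⟩ := (hf (x + a) x).mp hx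
      have hg1 : g ≠ 1 := by
        rintro rfl
        simp only [Units.val_one, mul_one] at hxg
        exact ha (add_eq_left.mp hxg)
      have hu := hcond' g hg hg1
      have hxa : x * ((g:R) - 1) = a := by
        rw [mul_sub, mul_one, ← hxg, add_sub_cancel_left]
      refine ⟨g, ⟨hg, hg1⟩, ?_⟩
      rw [← hxa, mul_assoc, Ring.mul_inverse_cancel _ hu, mul_one]
    · rintro ⟨g, ⟨hg, hg1⟩, rfl⟩
      have hu := hcond' g hg hg1
      set x := a * Ring.inverse ((g:R) - 1) with hxdef
      have hxa : x * ((g:R) - 1) = a := by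
        rw [hxdef, mul_assoc, Ring.inverse_mul_cancel _ hu, mul_one]
      refine (hf _ _).mpr ⟨g, hg, ?_⟩
      rw [← hxa]
      noncomm_ring
  have hInj : Set.InjOn (fun g : Rˣ => a * Ring.inverse ((g:R) - 1)) T := by
    intro g hgT h hhT heq
    simp only [hT, coe_filter, Set.mem_setOf_eq, mem_univ, true_and] at hgT hhT
    obtain ⟨hg, hg1⟩ := hgT
    obtain ⟨hh, hh1⟩ := hhT
    have hug := hcond' g hg hg1
    have huh := hcond' h hh hh1
    simp only at heq
    set x := a * Ring.inverse ((g:R) - 1) with hx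
    have hxg : x * ((g:R) - 1) = a := by
      rw [hx, mul_assoc, Ring.inverse_mul_cancel _ hug, mul_one]
    have hxh : x * ((h:R) - 1) = a := by
      rw [heq, mul_assoc, Ring.inverse_mul_cancel _ huh, mul_one]
    have hx0 : x ≠ 0 := by
      intro hz
      rw [hz, zero_mul] at hxg
      exact ha hxg.symm
    have hxgh : x * (g:R) = x * (h:R) := by
      have h2 : x * (g:R) - x * 1 = x * (h:R) - x * 1 := by
        rw [← mul_sub, ← mul_sub, hxg, hxh]
      simpa using sub_left_inj.mp h2
    by_contra hne
    have hgh1 : g * h⁻¹ ≠ 1 := fun hc => hne (by rwa [mul_inv_eq_one] at hc)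
    have hu2 := hcond' (g * h⁻¹) (G.mul_mem hg (G.inv_mem hh)) hgh1
    have hfix : x * (((g * h⁻¹ : Rˣ)):R) = x := by
      rw [Units.val_mul, ← mul_assoc, hxgh, mul_assoc, Units.mul_inv, mul_one]
    have hz : x * (((g*h⁻¹:Rˣ):R) - 1) = 0 := by
      rw [mul_sub, hfix, mul_one, sub_self]
    exact hx0 ((hu2.mul_left_eq_zero).mp hz)
  have hScard : S.card = k - 1 := by
    rw [hSimg, card_image_of_injOn hInj, hTcard]
  have hS0 : (0 : R) ∉ S := by
    simp only [hS, mem_filter, mem_univ, true_and]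
    rw [zero_add, hf]
    rintro ⟨g, hg, hag⟩
    exact ha (by simpa using hag)
  have hSma : (-a : R) ∉ S := by
    simp only [hS, mem_filter, mem_univ, true_and]
    rw [neg_add_cancel, hf]
    rintro ⟨g, hg, hag⟩
    apply ha
    have h2 : -a * (g:R) * ((g⁻¹:Rˣ):R) = 0 := by rw [← hag, zero_mul]
    rw [mul_assoc, Units.mul_inv, mul_one] at h2
    simpa using h2
  have hne0a : (0:R) ≠ -a := by
    intro h
    exact ha (by simpa using h.symm)
  have hmain : (univ.filter fun x => f0 (x + a) = f0 x)
      = if ∃ g ∈ G, a = (g : R) then insert 0 (insert (-a) S) else S := by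
    ext x
    simp only [mem_filter, mem_univ, true_and]
    by_cases hx0 : x = 0
    · subst hx0
      rw [hf0, hf0, if_neg (by simpa using ha), if_pos rfl, zero_add]
      by_cases haG : ∃ g ∈ G, a = (g:R)
      · rw [if_pos haG]
        simp only [mem_insert]
        constructor
        · intro _; exact Or.inl trivial
        · intro _
          obtain ⟨g, hg, hag⟩ := haG
          exact (hf a 1).mpr ⟨g, hg, by simpa using hag⟩
      · rw [if_neg haG]
        constructor
        · intro h
          obtain ⟨g, hg, hag⟩ := (hf a 1).mp h
          exact absurd ⟨g, hg, by simpa using hag⟩ haG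
        · intro h; exact absurd h hS0
    · by_cases hxa : x = -a
      · subst hxa
        rw [hf0, hf0, neg_add_cancel, if_pos rfl, if_neg hx0]
        by_cases haG : ∃ g ∈ G, a = (g:R)
        · rw [if_pos haG]
          simp only [mem_insert]
          constructor
          · intro _; simp
          · intro _
            obtain ⟨g, hg, rfl⟩ := haG
            refine (hf 1 (-(g:R))).mpr ⟨-1 * g⁻¹, G.mul_mem h1 (G.inv_mem hg), ?_⟩
            simp only [Units.val_mul, Units.val_neg, Units.val_one, neg_one_mul,
              neg_mul_neg, Units.mul_inv]
        · rw [if_neg haG]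
          constructor
          · intro h
            obtain ⟨g, hg, hag⟩ := (hf 1 (-a)).mp h
            exfalso
            apply haG
            refine ⟨-1 * g⁻¹, G.mul_mem h1 (G.inv_mem hg), ?_⟩
            have h2 : -a * (g:R) * ((g⁻¹:Rˣ):R) = 1 * ((g⁻¹:Rˣ):R) := by rw [← hag]
            rw [mul_assoc, Units.mul_inv, mul_one, one_mul] at h2
            simp only [Units.val_mul, Units.val_neg, Units.val_one, neg_one_mul]
            rw [← h2, neg_neg]
          · intro h; exact absurd h hSma
      · have hxa' : x + a ≠ 0 := by
          intro h
          exact hxa (eq_neg_of_add_eq_zero_left h)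
        rw [hf0, hf0, if_neg hxa', if_neg hx0]
        by_cases haG : ∃ g ∈ G, a = (g:R)
        · rw [if_pos haG]
          simp only [mem_insert, hS, mem_filter, mem_univ, true_and]
          constructor
          · intro h; right; right; exact h
          · rintro (h | h | h)
            · exact absurd h hx0
            · exact absurd h hxa
            · exact h
        · rw [if_neg haG]
          simp only [hS, mem_filter, mem_univ, true_and]
  rw [hmain]
  by_cases haG : ∃ g ∈ G, a = (g:R)
  · rw [if_pos haG, if_pos haG,
      card_insert_of_notMem (by simp [hSma, hS0, hne0a]),
      card_insert_of_notMem hSma, hScard]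
    omega
  · rw [if_neg haG, if_neg haG, hScard]
end

section
/- Let R be a finite ring of order n with subgroup G ≤ R^× of order k satisfying (G-1)\{0} ⊆ R^×, with (n-1)/k > 2 and -1 ∉ G. Then the function f_G^0 (equal to f_G except f_G^0(0) = f_G(1)) satisfies: for nonzero a ∈ R, |{x : f_G^0(x+a) = f_G^0(x)}| = k if a ∈ G ∪ (-G), and k - 1 otherwise. In particular f_G^0 is an (n, (n-1)/k, {k-1, k}) zero-difference function. -/
open Finset

open scoped Classical in
theorem stmt8 {R : Type*} [Ring R] [Fintype R] [DecidableEq R]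
    {B : Type*} [DecidableEq B]
    (G : Subgroup Rˣ) (n k : ℕ) (hn : n = Fintype.card R) (hk : k = Nat.card G)
    (hcond : ∀ g ∈ G, ((g : R) - 1 ≠ 0) → IsUnit ((g : R) - 1))
    (hdvd : k ∣ n - 1) (hm : 2 < (n - 1) / k) (h1 : (-1 : Rˣ) ∉ G)
    (f : R → B)
    (hf : ∀ x y : R, f x = f y ↔ ∃ g ∈ G, x = y * (g : R))
    (f0 : R → B) (hf0 : ∀ x, f0 x = if x = 0 then f 1 else f x) :
    ∀ a : R, a ≠ 0 →
      (univ.filter fun x => f0 (x + a) = f0 x).card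
        = if (∃ g ∈ G, a = (g : R)) ∨ (∃ g ∈ G, a = -(g : R)) then k else k - 1 := by
  intro a ha
  classical
  have hf0' : ∀ x : R, x ≠ 0 → f0 x = f x := fun x hx => by simp [hf0, hx]
  have hf00 : f0 0 = f 1 := by simp [hf0]
  have hu : ∀ g : Rˣ, g ∈ G → g ≠ 1 → IsUnit ((g : R) - 1) := by
    intro g hg hg1
    refine hcond g hg fun h => hg1 ?_
    ext
    simpa [sub_eq_zero] using h
  set T : Finset R := univ.filter (fun x => f0 (x + a) = f0 x) with hT
  set e : Rˣ → R := fun g => a * Ring.inverse ((g : R) - 1) with he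
  set Gf : Finset Rˣ := univ.filter (fun g => g ∈ G) with hGf
  have hGfcard : Gf.card = k := by
    rw [hk, Nat.card_eq_fintype_card, Fintype.card_subtype]
  have h1Gf : (1 : Rˣ) ∈ Gf := by simp [hGf, one_mem]
  have hkpos : 0 < k := hGfcard ▸ card_pos.mpr ⟨1, h1Gf⟩
  have key : ∀ g : Rˣ, g ∈ G → g ≠ 1 → (e g ≠ 0 ∧ e g * ((g : R) - 1) = a) := by
    intro g hg hg1
    have hu' := hu g hg hg1
    have h2 : e g * ((g : R) - 1) = a := by
      rw [he]
      simp only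
      rw [mul_assoc, Ring.inverse_mul_cancel _ hu', mul_one]
    exact ⟨fun h0 => ha (by rw [← h2, h0, zero_mul]), h2⟩
  have hS : T.filter (fun x => ¬(x = 0 ∨ x = -a)) = (Gf.erase 1).image e := by
    ext x
    simp only [hT, mem_filter, mem_image, mem_erase, hGf, mem_univ, true_and, not_or]
    constructor
    · rintro ⟨hfx, hx0, hxa⟩
      have hxa' : x + a ≠ 0 := fun h => hxa (eq_neg_of_add_eq_zero_left h)
      rw [hf0' _ hxa', hf0' _ hx0] at hfx
      obtain ⟨g, hg, hxg⟩ := (hf _ _).1 hfx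
      have hg1 : g ≠ 1 := by
        rintro rfl
        simp only [Units.val_one, mul_one] at hxg
        exact ha (add_eq_left.mp hxg)
      refine ⟨g, ⟨hg1, hg⟩, ?_⟩
      have hxm : x * ((g : R) - 1) = a := by
        rw [mul_sub, mul_one, ← hxg, add_sub_cancel_left]
      rw [he]
      simp only
      rw [← hxm, mul_assoc, Ring.mul_inverse_cancel _ (hu g hg hg1), mul_one]
    · rintro ⟨g, ⟨hg1, hg⟩, rfl⟩
      obtain ⟨hne, hmul⟩ := key g hg hg1
      have hadd : e g + a = e g * g := by
        rw [← hmul]; noncomm_ring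
      have hadd0 : e g + a ≠ 0 := by
        rw [hadd]
        intro h
        exact hne ((Units.mul_left_eq_zero g).mp h)
      refine ⟨?_, hne, fun h => hadd0 (by rw [h, neg_add_cancel])⟩
      rw [hf0' _ hadd0, hf0' _ hne]
      exact (hf _ _).2 ⟨g, hg, hadd⟩
  have hinj : Set.InjOn e ↑(Gf.erase 1) := by
    intro g hgm g' hgm' hgg'
    simp only [coe_erase, Set.mem_diff, mem_coe, mem_filter, mem_univ, true_and, hGf,
      Set.mem_singleton_iff] at hgm hgm'
    obtain ⟨hg, hg1⟩ := hgm
    obtain ⟨hg', hg1'⟩ := hgm'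
    by_contra hne
    obtain ⟨hx0, hxm⟩ := key g hg hg1
    obtain ⟨-, hxm'⟩ := key g' hg' hg1'
    rw [← hgg'] at hxm'
    have h3 : e g * (g : R) = e g * (g' : R) := by
      have h4 := hxm.trans hxm'.symm
      rw [mul_sub, mul_sub] at h4
      exact sub_left_inj.mp h4
    have h5 : e g * ((g * g'⁻¹ : Rˣ) : R) = e g := by
      rw [Units.val_mul, ← mul_assoc, h3, mul_assoc, ← Units.val_mul, mul_inv_cancel,
        Units.val_one, mul_one]
    have hgg1 : (g * g'⁻¹ : Rˣ) ≠ 1 := fun h => hne (mul_inv_eq_one.mp h)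
    have hw := hu (g * g'⁻¹) (mul_mem hg (inv_mem hg')) hgg1
    have h6 : e g * (((g * g'⁻¹ : Rˣ) : R) - 1) = 0 := by
      rw [mul_sub, h5, mul_one, sub_self]
    rw [← hw.unit_spec] at h6
    exact hx0 ((Units.mul_left_eq_zero hw.unit).mp h6)
  have hScard : (T.filter (fun x => ¬(x = 0 ∨ x = -a))).card = k - 1 := by
    rw [hS, card_image_of_injOn hinj, card_erase_of_mem h1Gf, hGfcard]
  have h0T : ((0 : R) ∈ T) ↔ ∃ g ∈ G, a = (g : R) := by
    simp only [hT, mem_filter, mem_univ, true_and, zero_add, hf00, hf0' a ha, hf]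
    constructor
    · rintro ⟨g, hg, h⟩; exact ⟨g, hg, by simpa using h⟩
    · rintro ⟨g, hg, h⟩; exact ⟨g, hg, by simpa using h⟩
  have hnaT : ((-a : R) ∈ T) ↔ ∃ g ∈ G, a = -(g : R) := by
    have hna : (-a : R) ≠ 0 := fun h => ha (neg_eq_zero.mp h)
    simp only [hT, mem_filter, mem_univ, true_and, neg_add_cancel, hf00, hf0' _ hna, hf]
    constructor
    · rintro ⟨g, hg, h⟩
      refine ⟨g⁻¹, inv_mem hg, ?_⟩
      have h2 : -a = ((g⁻¹ : Rˣ) : R) := by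
        calc -a = -a * ((g : R) * ((g⁻¹ : Rˣ) : R)) := by
              rw [← Units.val_mul, mul_inv_cancel, Units.val_one, mul_one]
          _ = (-a * (g : R)) * ((g⁻¹ : Rˣ) : R) := by rw [mul_assoc]
          _ = ((g⁻¹ : Rˣ) : R) := by rw [← h, one_mul]
      rw [← h2, neg_neg]
    · rintro ⟨g, hg, rfl⟩
      refine ⟨g⁻¹, inv_mem hg, ?_⟩
      rw [neg_neg, ← Units.val_mul, mul_inv_cancel, Units.val_one]
  have hexcl : ¬((∃ g ∈ G, a = (g : R)) ∧ (∃ g ∈ G, a = -(g : R))) := by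
    rintro ⟨⟨g, hg, hag⟩, ⟨g', hg', hag'⟩⟩
    have hcoe : (g : R) = ((-g' : Rˣ) : R) := by
      rw [← hag, hag', Units.val_neg]
    have hgg : g = -g' := Units.ext hcoe
    apply h1
    have hm1 : (-1 : Rˣ) = g * g'⁻¹ := by
      rw [hgg]
      simp
    rw [hm1]
    exact mul_mem hg (inv_mem hg')
  have hsplit : (T.filter (fun x => x = 0 ∨ x = -a)).card
      + (T.filter (fun x => ¬(x = 0 ∨ x = -a))).card = T.card :=
    card_filter_add_card_filter_not _
  rw [hScard] at hsplit
  show T.card = _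
  by_cases hA : ∃ g ∈ G, a = (g : R)
  · rw [if_pos (Or.inl hA)]
    have hB : ¬ ∃ g ∈ G, a = -(g : R) := fun hB => hexcl ⟨hA, hB⟩
    have hBeq : T.filter (fun x => x = 0 ∨ x = -a) = {0} := by
      ext x
      simp only [mem_filter, mem_singleton]
      constructor
      · rintro ⟨hxT, (rfl | rfl)⟩
        · rfl
        · exact absurd (hnaT.mp hxT) hB
      · rintro rfl
        exact ⟨h0T.mpr hA, Or.inl rfl⟩
    rw [hBeq, card_singleton] at hsplit
    omega
  · by_cases hB : ∃ g ∈ G, a = -(g : R)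
    · rw [if_pos (Or.inr hB)]
      have hBeq : T.filter (fun x => x = 0 ∨ x = -a) = {-a} := by
        ext x
        simp only [mem_filter, mem_singleton]
        constructor
        · rintro ⟨hxT, (rfl | rfl)⟩
          · exact absurd (h0T.mp hxT) hA
          · rfl
        · rintro rfl
          exact ⟨hnaT.mpr hB, Or.inr rfl⟩
      rw [hBeq, card_singleton] at hsplit
      omega
    · rw [if_neg (not_or.mpr ⟨hA, hB⟩)]
      have hBeq : T.filter (fun x => x = 0 ∨ x = -a) = ∅ := by
        ext x
        simp only [mem_filter, notMem_empty, iff_false, not_and, not_or]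
        rintro hxT
        constructor
        · rintro rfl; exact hA (h0T.mp hxT)
        · rintro rfl; exact hB (hnaT.mp hxT)
      rw [hBeq, card_empty] at hsplit
      omega
end

section
/- Let f be an (n, (n-1)/k, λ) ZDB function from abelian group A to B with one fiber of size 1 at a_0 (f(a_0) = b_0) and all other fibers of size k ≥ 2. Fix a with a_0 ∉ I(a) = f^{-1}(f(a)) and define g_a by changing the value at a_0 to f(a). Let D = (I(a) - a_0) ∩ (a_0 - I(a)). If D = I(a) - a_0 and (n-1)/k ≥ 2, then g_a is an (n, (n-1)/k, {k-1, k+1}) zero-difference function: for nonzero α, the count |{x : g_a(x+α) = g_a(x)}| equals λ + 2 = k+1 if α ∈ D and λ = k-1 otherwise. -/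
open Finset

theorem stmt10 {A B : Type*} [AddCommGroup A] [Fintype A] [DecidableEq A]
    [Fintype B] [DecidableEq B] (f : A → B)
    (n k lam : ℕ) (hn : n = Fintype.card A) (hk : 2 ≤ k)
    (hdvd : k ∣ n - 1) (hm2 : 2 ≤ (n - 1) / k)
    (a0 : A)
    (hfib0 : (univ.filter fun x => f x = f a0).card = 1)
    (hfib : ∀ b ∈ univ.image f, b ≠ f a0 → (univ.filter fun x => f x = b).card = k)
    (hzdb : ∀ α : A, α ≠ 0 → (univ.filter fun x => f (x + α) = f x).card = lam)
    (a : A) (ha : a0 ∉ univ.filter fun x => f x = f a)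
    (g : A → B) (hg : ∀ x, g x = if x = a0 then f a else f x)
    (I D : Finset A)
    (hI : I = univ.filter fun x => f x = f a)
    (hD : D = (I.image fun x => x - a0) ∩ (I.image fun x => a0 - x))
    (hDeq : D = I.image fun x => x - a0) :
    ∀ α : A, α ≠ 0 →
      (univ.filter fun x => g (x + α) = g x).card
        = if α ∈ I.image (fun x => x - a0) then k + 1 else k - 1 := by
  classical
  have hone : ∀ x, f x = f a0 → x = a0 := by
    intro x hx
    obtain ⟨b, hb⟩ := Finset.card_eq_one.mp hfib0
    have hx' : x ∈ univ.filter (fun y => f y = f a0) := by simp [hx]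
    have ha0' : a0 ∈ univ.filter (fun y => f y = f a0) := by simp
    rw [hb, Finset.mem_singleton] at hx' ha0'
    rw [hx', ha0']
  -- counting: lam = k - 1
  set T := (univ.image f).erase (f a0) with hT
  have hfa0mem : f a0 ∈ univ.image f := mem_image_of_mem f (mem_univ a0)
  have hcardA : Fintype.card A = T.card * k + 1 := by
    have h1 : (univ : Finset A).card
        = ∑ b ∈ univ.image f, (univ.filter fun x => f x = b).card :=
      Finset.card_eq_sum_card_fiberwise (fun x _ => mem_image_of_mem f (mem_univ x))
    have h2 : ∑ b ∈ univ.image f, (univ.filter fun x => f x = b).card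
        = (∑ b ∈ T, (univ.filter fun x => f x = b).card) + 1 := by
      rw [← Finset.sum_erase_add _ _ hfa0mem, hfib0]
    have h3 : ∑ b ∈ T, (univ.filter fun x => f x = b).card = T.card * k := by
      rw [Finset.sum_congr rfl fun b hb =>
        hfib b (Finset.mem_of_mem_erase hb) (Finset.ne_of_mem_erase hb)]
      rw [Finset.sum_const, smul_eq_mul]
    rw [← Finset.card_univ, h1, h2, h3]
  have hsum : ∑ β : A, (univ.filter fun x => f (x + β) = f x).card
      = T.card * (k * k) + 1 := by
    have hswap : ∑ β : A, (univ.filter fun x => f (x + β) = f x).card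
        = ∑ x : A, (univ.filter fun β => f (x + β) = f x).card := by
      simp only [Finset.card_filter]
      exact Finset.sum_comm
    have hbij : ∀ x : A, (univ.filter fun β : A => f (x + β) = f x)
        = (univ.filter fun y => f y = f x).image (fun y => y - x) := by
      intro x
      ext β
      simp only [mem_filter, mem_image, mem_univ, true_and]
      constructor
      · intro h
        exact ⟨x + β, h, by abel⟩
      · rintro ⟨y, hy, rfl⟩
        have hxy : x + (y - x) = y := by abel
        rw [hxy]; exact hy
    have hstep : ∀ x : A, (univ.filter fun β : A => f (x + β) = f x).card
        = (univ.filter fun y => f y = f x).card := by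
      intro x
      rw [hbij x, Finset.card_image_of_injective _ sub_left_injective]
    have hcomp : ∑ x : A, (univ.filter fun y => f y = f x).card
        = ∑ b ∈ univ.image f, (univ.filter fun x => f x = b).card
            • (univ.filter fun y => f y = b).card :=
      Finset.sum_comp (fun b => (univ.filter fun y => f y = b).card) f
    have hfin : ∑ b ∈ univ.image f, (univ.filter fun x => f x = b).card
            • (univ.filter fun y => f y = b).card = T.card * (k * k) + 1 := by
      rw [← Finset.sum_erase_add _ _ hfa0mem, hfib0]
      have h3 : ∑ b ∈ T, (univ.filter fun x => f x = b).card
          • (univ.filter fun y => f y = b).card = T.card * (k * k) := by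
        rw [Finset.sum_congr rfl fun b hb => by
          rw [hfib b (Finset.mem_of_mem_erase hb) (Finset.ne_of_mem_erase hb)]]
        simp only [smul_eq_mul, Finset.sum_const]
      rw [h3]
      simp
    rw [hswap, Finset.sum_congr rfl fun x _ => hstep x, hcomp, hfin]
  have hlam : lam = k - 1 := by
    have hsplit : ∑ β : A, (univ.filter fun x => f (x + β) = f x).card
        = (Fintype.card A - 1) * lam + Fintype.card A := by
      rw [← Finset.sum_erase_add _ _ (mem_univ (0 : A))]
      congr 1
      · rw [Finset.sum_congr rfl (fun β hβ => hzdb β (Finset.ne_of_mem_erase hβ)),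
          Finset.sum_const, Finset.card_erase_of_mem (mem_univ 0), Finset.card_univ,
          smul_eq_mul]
      · simp
    have hM1 : Fintype.card A - 1 = T.card * k := by rw [hcardA]; simp
    have hMpos : T.card * k ≠ 0 := by
      intro h0
      have : n - 1 = 0 := by omega
      rw [this] at hm2
      simp at hm2
    have heq : T.card * k * (lam + 1) = T.card * k * k := by
      have := hsplit.symm.trans hsum
      rw [hM1, hcardA] at this
      have h2 : T.card * k * lam + T.card * k = T.card * (k * k) := by omega
      calc T.card * k * (lam + 1) = T.card * k * lam + T.card * k := by ring
        _ = T.card * (k * k) := h2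
        _ = T.card * k * k := by ring
    have := Nat.eq_of_mul_eq_mul_left (Nat.pos_of_ne_zero hMpos) heq
    omega
  -- main part
  have hsub : (I.image fun x => x - a0) ⊆ I.image fun x => a0 - x := by
    rw [← hDeq, hD]; exact Finset.inter_subset_right
  have hXY : (I.image fun x => x - a0) = I.image fun x => a0 - x := by
    refine Finset.eq_of_subset_of_card_le hsub ?_
    rw [Finset.card_image_of_injective _ sub_left_injective,
      Finset.card_image_of_injective _ sub_right_injective]
  have hXmem : ∀ β : A, (β ∈ I.image fun x => x - a0) ↔ f (a0 + β) = f a := by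
    intro β
    rw [hI]
    simp only [mem_image, mem_filter, mem_univ, true_and]
    constructor
    · rintro ⟨x, hx, rfl⟩
      have hxx : a0 + (x - a0) = x := by abel
      rw [hxx]; exact hx
    · intro h
      exact ⟨a0 + β, h, by abel⟩
  have hYmem : ∀ β : A, (β ∈ I.image fun x => a0 - x) ↔ f (a0 - β) = f a := by
    intro β
    rw [hI]
    simp only [mem_image, mem_filter, mem_univ, true_and]
    constructor
    · rintro ⟨x, hx, rfl⟩
      have hxx : a0 - (a0 - x) = x := by abel
      rw [hxx]; exact hx
    · intro h
      exact ⟨a0 - β, h, by abel⟩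
  have hga0 : g a0 = f a := by rw [hg]; simp
  have hgne : ∀ x, x ≠ a0 → g x = f x := by intro x hx; rw [hg, if_neg hx]
  intro α hα
  have ha0α : a0 + α ≠ a0 := fun h => hα (by simpa using h)
  have ha0α' : a0 - α ≠ a0 := fun h => hα (by simpa [sub_eq_self] using h)
  have ha0S : a0 ∉ univ.filter fun x => f (x + α) = f x := by
    simp only [mem_filter, mem_univ, true_and]
    intro h; exact ha0α (hone _ h)
  have ha0S' : (a0 - α) ∉ univ.filter fun x => f (x + α) = f x := by
    simp only [mem_filter, mem_univ, true_and]
    have hxa : a0 - α + α = a0 := by abel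
    rw [hxa]
    intro h
    exact ha0α' (hone _ h.symm)
  by_cases hmem : α ∈ I.image fun x => x - a0
  · have hmemY : α ∈ I.image fun x => a0 - x := by rw [← hXY]; exact hmem
    have h1 : f (a0 + α) = f a := (hXmem α).mp hmem
    have h2 : f (a0 - α) = f a := (hYmem α).mp hmemY
    have hset : (univ.filter fun x => g (x + α) = g x)
        = insert a0 (insert (a0 - α) (univ.filter fun x => f (x + α) = f x)) := by
      ext x
      simp only [mem_filter, mem_univ, true_and, mem_insert]
      constructor
      · intro h
        by_cases hx : x = a0
        · exact Or.inl hx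
        by_cases hx2 : x + α = a0
        · refine Or.inr (Or.inl ?_)
          rw [← hx2]; abel
        · rw [hgne _ hx2, hgne _ hx] at h
          exact Or.inr (Or.inr h)
      · rintro (rfl | rfl | h)
        · rw [hga0, hgne _ ha0α]; exact h1
        · have hxa : a0 - α + α = a0 := by abel
          rw [hxa, hga0, hgne _ ha0α']
          exact h2.symm
        · have hx : x ≠ a0 := by
            intro hx; rw [hx] at h; exact ha0α (hone _ h)
          have hx2 : x + α ≠ a0 := by
            intro hx2; rw [hx2] at h
            exact hx (hone _ h.symm)
          rw [hgne _ hx2, hgne _ hx]; exact h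
    have hnotin1 : a0 ∉ insert (a0 - α) (univ.filter fun x => f (x + α) = f x) := by
      simp only [mem_insert]
      push_neg
      exact ⟨fun h => hα (sub_eq_self.mp h.symm), by simpa using ha0S⟩
    rw [hset, if_pos hmem, Finset.card_insert_of_notMem hnotin1,
      Finset.card_insert_of_notMem ha0S', hzdb α hα, hlam]
    omega
  · have hmemY : α ∉ I.image fun x => a0 - x := by rw [← hXY]; exact hmem
    have hset : (univ.filter fun x => g (x + α) = g x)
        = univ.filter fun x => f (x + α) = f x := by
      ext x
      simp only [mem_filter, mem_univ, true_and]
      by_cases hx : x = a0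
      · subst hx
        rw [hgne _ ha0α, hga0]
        constructor
        · intro h; exact absurd ((hXmem α).mpr h) hmem
        · intro h; exact absurd (hone _ h) ha0α
      by_cases hx2 : x + α = a0
      · have hxv : x = a0 - α := by rw [← hx2]; abel
        rw [hx2, hga0, hgne _ hx]
        constructor
        · intro h
          refine absurd ((hYmem α).mpr ?_) hmemY
          rw [← hxv]; exact h.symm
        · intro h
          exact absurd (hone _ h.symm) hx
      · rw [hgne _ hx2, hgne _ hx]
    rw [hset, if_neg hmem, hzdb α hα, hlam]
end

section
/- Let f : A → B be an (n, m, S) zero-difference function with λ = max S, giving the code C_f = {(f(a_0 + a_i), ..., f(a_{n-1} + a_i)) : 0 ≤ i ≤ n-1} over B, which is an (n, n, n-λ, [w_0, ..., w_{m-1}]) constant composition code. If C_f meets the bound n = nd/(nd - n² + Σ_i w_i²) with d = n - λ (i.e., C_f is optimal), then S = {λ}, i.e., f is zero-difference balanced. -/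
/-!
Counting the pairs `(x, y)` with `f x = f y` in two ways gives
`∑_α λ_α = ∑_b w_b²`, and `λ_0 = n`. Optimality of `C_f` forces `∑_b w_b² = n + (n - 1) λ`,
so the `n - 1` numbers `λ_α` with `α ≠ 0`, each at most `λ`, sum to `(n - 1) λ`:
all of them equal `λ`.
-/

open Finset

theorem card_filter_add_eq_card_fiber {A B : Type*} [AddGroup A] [Fintype A] [DecidableEq B]
    (f : A → B) (x : A) :
    #{α | f (x + α) = f x} = #{y | f y = f x} :=
  card_bij (fun α _ => x + α) (by simp) (fun _ _ _ _ => add_left_cancel)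
    fun y hy => ⟨-x + y, by simpa using hy, by simp⟩

theorem sum_card_filter_add_eq_sum_sq {A B : Type*} [AddGroup A] [Fintype A] [DecidableEq B]
    (f : A → B) :
    ∑ α, #{x | f (x + α) = f x} = ∑ b ∈ univ.image f, #{x | f x = b} ^ 2 := by
  calc ∑ α, #{x | f (x + α) = f x}
      = ∑ x, #{α | f (x + α) = f x} := by simp only [card_filter]; exact sum_comm
    _ = ∑ x, #{y | f y = f x} := sum_congr rfl fun x _ => card_filter_add_eq_card_fiber f x
    _ = ∑ b ∈ univ.image f, #{x | f x = b} ^ 2 := by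
      rw [sum_comp (fun b => #{y | f y = b}) f]
      simp only [smul_eq_mul, sq]

theorem card_add_sum_erase_zero_eq_sum_sq {A B : Type*} [AddGroup A] [Fintype A]
    [DecidableEq A] [DecidableEq B] (f : A → B) :
    Fintype.card A + ∑ α ∈ univ.erase 0, #{x | f (x + α) = f x}
      = ∑ b ∈ univ.image f, #{x | f x = b} ^ 2 := by
  rw [← sum_card_filter_add_eq_sum_sq, ← add_sum_erase _ _ (mem_univ 0)]
  simp only [add_zero, filter_true, card_univ]

/-- Equality in the Luo–Fu–Vinck–Chen bound for a code of size `n` and distance `n - λ`. -/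
theorem sum_sq_eq_of_bound_eq {n lam W : ℚ} (hn : n ≠ 0)
    (hopt : n = n * (n - lam) / (n * (n - lam) - n ^ 2 + W)) :
    W = n + (n - 1) * lam := by
  have hD : n * (n - lam) - n ^ 2 + W ≠ 0 := by
    rintro hD
    rw [hD, div_zero] at hopt
    exact hn hopt
  rw [eq_div_iff hD] at hopt
  linarith [mul_left_cancel₀ hn hopt]

theorem stmt11_general {A B : Type*} [AddCommGroup A] [Fintype A] [DecidableEq A]
    [DecidableEq B] (f : A → B)
    (n lam : ℕ) (hn : n = Fintype.card A)
    (hmax : ∀ α : A, α ≠ 0 → (univ.filter fun x => f (x + α) = f x).card ≤ lam)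
    (W : ℚ) (hW : W = ∑ b ∈ univ.image f, ((univ.filter fun x => f x = b).card : ℚ) ^ 2)
    (hopt : (n : ℚ) = (n : ℚ) * ((n : ℚ) - lam)
        / ((n : ℚ) * ((n : ℚ) - lam) - (n : ℚ) ^ 2 + W)) :
    ∀ α : A, α ≠ 0 → (univ.filter fun x => f (x + α) = f x).card = lam := by
  have hn1 : 1 ≤ n := hn ▸ Fintype.card_pos
  have hWval := sum_sq_eq_of_bound_eq (by exact_mod_cast (by omega : n ≠ 0)) hopt
  have hcount : W = n + ∑ α ∈ univ.erase 0, (#{x | f (x + α) = f x} : ℚ) := by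
    rw [hW, hn]
    exact_mod_cast (card_add_sum_erase_zero_eq_sum_sq f).symm
  have hsum : ∑ α ∈ univ.erase 0, (#{x | f (x + α) = f x} : ℚ)
      = ∑ _α ∈ univ.erase (0 : A), (lam : ℚ) := by
    rw [sum_const, card_erase_of_mem (mem_univ 0), card_univ, ← hn, nsmul_eq_mul,
      Nat.cast_pred hn1]
    linarith
  have hle : ∀ α ∈ univ.erase 0, (#{x | f (x + α) = f x} : ℚ) ≤ lam := fun α hα => by
    exact_mod_cast hmax α (ne_of_mem_erase hα)
  intro α hα
  exact_mod_cast (sum_eq_sum_iff_of_le hle).mp hsum α (mem_erase.mpr ⟨hα, mem_univ α⟩)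

theorem stmt11 {A B : Type*} [AddCommGroup A] [Fintype A] [DecidableEq A]
    [Fintype B] [DecidableEq B] (f : A → B)
    (n lam : ℕ) (hn : n = Fintype.card A) (hn2 : 2 ≤ n)
    (hmax : ∀ α : A, α ≠ 0 → (univ.filter fun x => f (x + α) = f x).card ≤ lam)
    (hmem : ∃ α : A, α ≠ 0 ∧ (univ.filter fun x => f (x + α) = f x).card = lam)
    (W : ℚ) (hW : W = ∑ b ∈ univ.image f, ((univ.filter fun x => f x = b).card : ℚ) ^ 2)
    (hpos : (n : ℚ) * ((n : ℚ) - lam) - (n : ℚ) ^ 2 + W > 0)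
    (hopt : (n : ℚ) = (n : ℚ) * ((n : ℚ) - lam)
        / ((n : ℚ) * ((n : ℚ) - lam) - (n : ℚ) ^ 2 + W)) :
    ∀ α : A, α ≠ 0 → (univ.filter fun x => f (x + α) = f x).card = lam :=
  stmt11_general f n lam hn hmax W hW hopt
end

section
/- Let f : A → B be an (n, m, S) zero-difference function with λ = max S, and suppose n ≥ mλ so that the preimage sets D_i = f^{-1}(b_i) form an (n, [w_0,...,w_{m-1}], n-λ) difference system of sets. Then this DSS is optimal (meets the bound n ≥ √SQUARE((n-λ)(n-1) + ⌈(n-λ)(n-1)/(m-1)⌉)) if and only if n ≥ mλ - m + 2. -/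
/-!
Counting the pairs `(x, α)` with `f (x + α) = f x` in two ways gives `∑ |D_i|² ≤ n + (n - 1) λ`,
and Cauchy–Schwarz over the `m` fibres turns this into `m (n - λ)(n - 1) ≤ (m - 1) n²`, i.e.
`T ≤ n²`. Hence `⌈√T⌉ = n` exactly when `(n - 1)² < T`; clearing the ceiling, this reads
`(n - 1)² (m - 1) < m (n - λ)(n - 1)`, which after cancelling `n - 1` is `n - 1 > m (λ - 1)`.
-/

open Finset

/-- The smallest perfect square that is no less than `x`. -/
def squareAbove (x : ℕ) : ℕ := if x = 0 then 0 else (Nat.sqrt (x - 1) + 1) ^ 2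

section ShiftCoincidences

variable {A B : Type*} [AddGroup A] [Fintype A] [DecidableEq B] (f : A → B)

theorem sum_card_shift_eq_sum_sq_card_fiber :
    ∑ α, #{x | f (x + α) = f x} = ∑ b ∈ univ.image f, #{x | f x = b} ^ 2 := by
  have hshift (x : A) : #{α | f (x + α) = f x} = #{y | f y = f x} :=
    card_equiv (Equiv.addLeft x) (by simp)
  calc ∑ α, #{x | f (x + α) = f x}
      = ∑ x, #{α | f (x + α) = f x} := by simp only [card_filter]; exact sum_comm
    _ = ∑ x, #{y | f y = f x} := sum_congr rfl fun x _ => hshift x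
    _ = ∑ b ∈ univ.image f, #{x | f x = b} ^ 2 := by
      rw [sum_comp (fun b => #{y | f y = b}) f]
      simp only [smul_eq_mul, sq]

theorem card_sq_le_card_image_mul_sum_card_shift :
    Fintype.card A ^ 2 ≤ #(univ.image f) * ∑ α, #{x | f (x + α) = f x} := by
  rw [sum_card_shift_eq_sum_sq_card_fiber, ← card_univ, card_eq_sum_card_image f univ]
  exact sq_sum_le_card_mul_sum_sq

theorem sum_card_shift_le {lam : ℕ}
    (hmax : ∀ α : A, α ≠ 0 → #{x | f (x + α) = f x} ≤ lam) :
    ∑ α, #{x | f (x + α) = f x} ≤ Fintype.card A + (Fintype.card A - 1) * lam := by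
  classical
  rw [← add_sum_erase _ _ (mem_univ 0)]
  gcongr
  · exact card_le_univ _
  · calc ∑ α ∈ univ.erase 0, #{x | f (x + α) = f x}
        ≤ ∑ _α ∈ univ.erase (0 : A), lam := sum_le_sum fun α hα => hmax α (ne_of_mem_erase hα)
      _ = (Fintype.card A - 1) * lam := by
        rw [sum_const, card_erase_of_mem (mem_univ _), card_univ, smul_eq_mul]

end ShiftCoincidences

theorem sqrt_squareAbove_eq_iff {T n : ℕ} (hn : 0 < n) :
    Nat.sqrt (squareAbove T) = n ↔ (n - 1) ^ 2 < T ∧ T ≤ n ^ 2 := by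
  rcases Nat.eq_zero_or_pos T with rfl | hT
  · simp [squareAbove]; omega
  rw [squareAbove, if_neg hT.ne', Nat.sqrt_eq']
  have h := (Nat.eq_sqrt' (a := n - 1) (n := T - 1))
  rw [Nat.sub_add_cancel hn] at h
  omega

theorem lt_add_ceil_div_iff {N d k : ℤ} (hd : 0 < d) :
    k < N + ⌈(N : ℚ) / d⌉ ↔ k * d < (d + 1) * N := by
  rw [← sub_lt_iff_lt_add', Int.lt_ceil, lt_div_iff₀ (by exact_mod_cast hd),
    ← Int.cast_mul, Int.cast_lt]
  constructor <;> intro h <;> linarith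

theorem add_ceil_div_le_iff {N d k : ℤ} (hd : 0 < d) :
    N + ⌈(N : ℚ) / d⌉ ≤ k ↔ (d + 1) * N ≤ k * d := by
  rw [← not_lt, lt_add_ceil_div_iff hd, not_lt]

theorem stmt12_general {A B : Type*} [AddCommGroup A] [Fintype A]
    [Fintype B] [DecidableEq B] (f : A → B)
    (n m lam : ℕ) (hn : n = Fintype.card A) (hn2 : 2 ≤ n)
    (hm : m = (univ.image f).card) (hm2 : 2 ≤ m)
    (hmax : ∀ α : A, α ≠ 0 → (univ.filter fun x => f (x + α) = f x).card ≤ lam)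
    (hml : m * lam ≤ n)
    (T : ℕ)
    (hT : T = (n - lam) * (n - 1)
        + (⌈((n : ℚ) - lam) * ((n : ℚ) - 1) / ((m : ℚ) - 1)⌉).toNat) :
    Nat.sqrt (squareAbove T) = n ↔ (m : ℤ) * lam - m + 2 ≤ n := by
  have hlam : lam < n := by nlinarith
  have hcount : n ^ 2 ≤ m * (n + (n - 1) * lam) := by
    subst hn hm
    exact (card_sq_le_card_image_mul_sum_card_shift f).trans
      (Nat.mul_le_mul_left _ (sum_card_shift_le f hmax))
  have hd : (0 : ℤ) < m - 1 := by omega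
  have hceil : 0 ≤ ⌈((n : ℚ) - lam) * ((n : ℚ) - 1) / ((m : ℚ) - 1)⌉ := by
    have : (lam : ℚ) ≤ n := by exact_mod_cast hlam.le
    have : (1 : ℚ) ≤ n := by exact_mod_cast (by omega : 1 ≤ n)
    have : (1 : ℚ) ≤ m := by exact_mod_cast (by omega : 1 ≤ m)
    exact Int.ceil_nonneg (div_nonneg (mul_nonneg (by linarith) (by linarith)) (by linarith))
  have hTN : (T : ℤ) = (n - lam) * (n - 1)
      + ⌈(((n - lam) * (n - 1) : ℤ) : ℚ) / ((m - 1 : ℤ) : ℚ)⌉ := by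
    rw [hT]
    push_cast [Nat.cast_sub hlam.le, Nat.cast_sub (by omega : 1 ≤ n), Int.toNat_of_nonneg hceil]
    rfl
  rw [sqrt_squareAbove_eq_iff (by omega)]
  zify [hlam.le, (by omega : 1 ≤ n)] at hcount ⊢
  rw [hTN, lt_add_ceil_div_iff hd, add_ceil_div_le_iff hd]
  refine (and_iff_left (by linear_combination hcount)).trans ?_
  have hn1 : (0 : ℤ) < n - 1 := by omega
  rw [show ((n : ℤ) - 1) ^ 2 * (m - 1) = (n - 1) * ((n - 1) * (m - 1)) by ring,
    show ((m : ℤ) - 1 + 1) * ((n - lam) * (n - 1)) = (n - 1) * (m * (n - lam)) by ring,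
    mul_lt_mul_iff_right₀ hn1]
  constructor <;> intro h <;> linarith

theorem stmt12 {A B : Type*} [AddCommGroup A] [Fintype A] [DecidableEq A]
    [Fintype B] [DecidableEq B] (f : A → B)
    (n m lam : ℕ) (hn : n = Fintype.card A) (hn2 : 2 ≤ n)
    (hm : m = (univ.image f).card) (hm2 : 2 ≤ m)
    (hmax : ∀ α : A, α ≠ 0 → (univ.filter fun x => f (x + α) = f x).card ≤ lam)
    (hmem : ∃ α : A, α ≠ 0 ∧ (univ.filter fun x => f (x + α) = f x).card = lam)
    (hml : m * lam ≤ n)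
    (T : ℕ)
    (hT : T = (n - lam) * (n - 1)
        + (⌈((n : ℚ) - lam) * ((n : ℚ) - 1) / ((m : ℚ) - 1)⌉).toNat) :
    Nat.sqrt (squareAbove T) = n ↔ (m : ℤ) * lam - m + 2 ≤ n :=
  stmt12_general f n m lam hn hn2 hm hm2 hmax hml T hT
end

section
/- Let f be an (n, (n-1)/k + 1, k-1) ZDB function with k ≥ 2 and m = (n-1)/k + 1 ≥ 2. Then the DSS formed by the fibers of f is optimal whenever n ≥ k(k-1)/2 + 1. -/
open Finset

theorem stmt13 {A B : Type*} [AddCommGroup A] [Fintype A] [DecidableEq A]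
    [Fintype B] [DecidableEq B] (f : A → B)
    (n k m : ℕ) (hn : n = Fintype.card A) (hn2 : 2 ≤ n) (hk : 2 ≤ k)
    (hdvd : k ∣ n - 1) (hmdef : m = (n - 1) / k + 1)
    (hm : m = (univ.image f).card) (hm2 : 2 ≤ m)
    (hzdb : ∀ α : A, α ≠ 0 → (univ.filter fun x => f (x + α) = f x).card = k - 1)
    (hbound : k * (k - 1) / 2 + 1 ≤ n)
    (T : ℕ)
    (hT : T = (n - (k - 1)) * (n - 1)
        + (⌈((n : ℚ) - (k - 1 : ℕ)) * ((n : ℚ) - 1) / ((m : ℚ) - 1)⌉).toNat) :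
    Nat.sqrt (squareAbove T) = n := by
  -- n - 1 = k * d
  set d : ℕ := (n - 1) / k with hddef
  have hd : k * d = n - 1 := Nat.mul_div_cancel' hdvd
  have hd1 : 1 ≤ d := by omega
  -- 2n ≥ k(k-1) + 2
  have heven : 2 ∣ k * (k - 1) := by
    have h : k * (k - 1) = (k - 1) * ((k - 1) + 1) := by
      have hk1 : k - 1 + 1 = k := by omega
      rw [hk1]; ring
    rw [h]
    exact (Nat.even_mul_succ_self (k - 1)).two_dvd
  have h2n : k * (k - 1) + 2 ≤ 2 * n := by
    have := Nat.mul_le_mul_right 2 hbound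
    rw [add_mul, Nat.div_mul_cancel heven] at this
    omega
  have hnk : k ≤ n := by
    have : 2 * (k - 1) ≤ k * (k - 1) := Nat.mul_le_mul_right (k - 1) hk
    omega
  -- compute the ceiling term
  have hkm1 : (k : ℕ) - 1 ≤ n := by omega
  have hceil : (⌈((n : ℚ) - (k - 1 : ℕ)) * ((n : ℚ) - 1) / ((m : ℚ) - 1)⌉).toNat
      = (n - (k - 1)) * k := by
    have h1 : (n : ℚ) - ((k - 1 : ℕ) : ℚ) = ((n - (k - 1) : ℕ) : ℚ) := by
      rw [Nat.cast_sub hkm1]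
    have h2 : (n : ℚ) - 1 = ((n - 1 : ℕ) : ℚ) := by
      rw [Nat.cast_sub (by omega)]; norm_num
    have h3 : (m : ℚ) - 1 = (d : ℚ) := by
      rw [hmdef]; push_cast; ring
    have hdQ : (d : ℚ) ≠ 0 := by positivity
    have key : ((n : ℚ) - (k - 1 : ℕ)) * ((n : ℚ) - 1) / ((m : ℚ) - 1)
        = (((n - (k - 1)) * k : ℕ) : ℚ) := by
      rw [h1, h2, h3, ← hd, Nat.cast_mul, Nat.cast_mul, mul_div_assoc,
        mul_div_cancel_right₀ _ hdQ]
    rw [key, Int.ceil_natCast, Int.toNat_natCast]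
  rw [hceil] at hT
  have hTval : T = (n - (k - 1)) * ((n - 1) + k) := by rw [hT]; ring
  -- T = n^2 - (k-1)^2 ; bounds
  set K : ℕ := k - 1 with hK
  have hkK : k = K + 1 := by omega
  obtain ⟨b, hb⟩ : ∃ b, n = K + b + 1 := ⟨n - K - 1, by omega⟩
  have hTb : T = (b + 1) * (2 * K + b + 1) := by
    rw [hTval]; congr 1 <;> omega
  have hKb : K * K ≤ 2 * K + 2 * b := by
    have e3 : k * K = K * K + K := by rw [hkK]; ring
    omega
  have e1 : (K + b) * (K + b) = K * K + 2 * (K * b) + b * b := by ring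
  have e2 : (b + 1) * (2 * K + b + 1) = 2 * (K * b) + b * b + 2 * b + 2 * K + 1 := by ring
  have e4 : (K + b + 1) * (K + b + 1)
      = K * K + 2 * (K * b) + b * b + 2 * K + 2 * b + 1 := by ring
  have hlow : (K + b) * (K + b) + 1 ≤ T := by omega
  have hhigh : T ≤ n * n := by rw [hb]; omega
  have hT0 : T ≠ 0 := by omega
  have hsqrt : Nat.sqrt (T - 1) = K + b := by
    have hle : K + b ≤ Nat.sqrt (T - 1) := Nat.le_sqrt.mpr (by omega)
    have hlt : Nat.sqrt (T - 1) < n := Nat.sqrt_lt'.mpr (by rw [pow_two]; omega)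
    omega
  rw [squareAbove, if_neg hT0, hsqrt]
  have hfin : K + b + 1 = n := by omega
  rw [hfin]
  exact Nat.sqrt_eq' n
end

section
/- Let f : A → B be an (n, m, S) zero-difference function on a cyclic group A with generator α, λ = max S, and C = (n-ε)(n+ε-m)/(m(n-1)) where n = km + ε, 0 ≤ ε < m. The frequency-hopping sequence T = (f(iα))_{i=0}^{n-1} has maximum Hamming autocorrelation H(T) = λ, and T meets the Lempel–Greenberger bound H(T) = ⌈C⌉ if and only if 0 ≤ λ - C < 1. -/
open Finset

theorem stmt14 {A B : Type*} [AddCommGroup A] [Fintype A] [DecidableEq A]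
    [Fintype B] [DecidableEq B] (f : A → B)
    (α : A) (hgen : ∀ x : A, x ∈ AddSubgroup.zmultiples α)
    (n m ε lam : ℕ) (hn : n = Fintype.card A) (hn2 : 2 ≤ n)
    (hm : m = (univ.image f).card) (hε : ε = n % m)
    (hmax : ∀ a : A, a ≠ 0 → (univ.filter fun x => f (x + a) = f x).card ≤ lam)
    (hmem : ∃ a : A, a ≠ 0 ∧ (univ.filter fun x => f (x + a) = f x).card = lam)
    (H : ℕ → ℕ)
    (hH : ∀ t, H t = ((Finset.range n).filter fun i =>
        f (i • α) = f (((i + t) % n) • α)).card)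
    (HT : ℕ)
    (hHT : HT = ((Finset.Ico 1 n).image H).max'
        ((Finset.nonempty_Ico.mpr (by omega)).image H))
    (C : ℝ) (hC : C = ((n : ℝ) - ε) * ((n : ℝ) + ε - m) / (m * ((n : ℝ) - 1))) :
    HT = lam ∧ ((HT : ℤ) = ⌈C⌉ ↔ 0 ≤ (lam : ℝ) - C ∧ (lam : ℝ) - C < 1) := by
  -- order of α is n
  have htop : AddSubgroup.zmultiples α = ⊤ := by
    ext x; simp [hgen x]
  have hord : addOrderOf α = n := by
    rw [← Fintype.card_zmultiples, hn]
    exact Fintype.card_congr (Equiv.subtypeUnivEquiv hgen)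
  -- key : H t = count for a = t • α
  have hkey : ∀ t, H t = (univ.filter fun x => f (x + t • α) = f x).card := by
    intro t
    rw [hH t]
    refine Finset.card_bij (fun i _ => i • α) ?_ ?_ ?_
    · intro i hi
      simp only [mem_filter, mem_univ, true_and]
      simp only [mem_filter, mem_range] at hi
      have : ((i + t) % n) • α = i • α + t • α := by
        rw [← hord, mod_addOrderOf_nsmul, add_nsmul]
      rw [this] at hi
      exact hi.2.symm
    · intro i hi j hj hij
      simp only [mem_filter, mem_range] at hi hj
      have := nsmul_injOn_Iio_addOrderOf (x := α)
        (by rw [hord]; exact Set.mem_Iio.mpr hi.1)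
        (by rw [hord]; exact Set.mem_Iio.mpr hj.1) hij
      exact this
    · intro b hb
      simp only [mem_filter, mem_univ, true_and] at hb
      obtain ⟨k, hk⟩ := AddSubgroup.mem_zmultiples_iff.mp (hgen b)
      set i : ℕ := (k % (n : ℤ)).toNat with hi
      have hnpos : (0:ℤ) < n := by positivity
      have hilt : i < n := by
        have := Int.emod_lt_of_pos k hnpos
        have := Int.emod_nonneg k (by omega : (n:ℤ) ≠ 0)
        omega
      have hib : i • α = b := by
        have : (i : ℤ) = k % n := Int.toNat_of_nonneg (Int.emod_nonneg k (by omega))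
        calc i • α = (i : ℤ) • α := (natCast_zsmul α i).symm
          _ = (k % (n:ℤ)) • α := by rw [this]
          _ = k • α := by rw [← hord]; exact mod_addOrderOf_zsmul α k
          _ = b := hk
      refine ⟨i, ?_, hib⟩
      simp only [mem_filter, mem_range]
      refine ⟨hilt, ?_⟩
      have : ((i + t) % n) • α = i • α + t • α := by
        rw [← hord, mod_addOrderOf_nsmul, add_nsmul]
      rw [this, hib, hb]
  -- t • α ≠ 0 for t ∈ [1, n)
  have hne : ∀ t, 1 ≤ t → t < n → t • α ≠ 0 := by
    intro t h1 h2 h0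
    have := addOrderOf_dvd_of_nsmul_eq_zero h0
    rw [hord] at this
    have := Nat.le_of_dvd (by omega) this
    omega
  have hfirst : HT = lam := by
    rw [hHT]
    apply le_antisymm
    · apply Finset.max'_le
      intro y hy
      obtain ⟨t, ht, rfl⟩ := Finset.mem_image.mp hy
      rw [Finset.mem_Ico] at ht
      rw [hkey t]
      exact hmax _ (hne t ht.1 ht.2)
    · obtain ⟨a, ha0, hacard⟩ := hmem
      obtain ⟨k, hk⟩ := AddSubgroup.mem_zmultiples_iff.mp (hgen a)
      set t : ℕ := (k % (n : ℤ)).toNat with hti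
      have hnpos : (0:ℤ) < n := by positivity
      have hilt : t < n := by
        have := Int.emod_lt_of_pos k hnpos
        have := Int.emod_nonneg k (by omega : (n:ℤ) ≠ 0)
        omega
      have hta : t • α = a := by
        have : (t : ℤ) = k % n := Int.toNat_of_nonneg (Int.emod_nonneg k (by omega))
        calc t • α = (t : ℤ) • α := (natCast_zsmul α t).symm
          _ = (k % (n:ℤ)) • α := by rw [this]
          _ = k • α := by rw [← hord]; exact mod_addOrderOf_zsmul α k
          _ = a := hk
      have ht1 : 1 ≤ t := by
        rcases Nat.eq_zero_or_pos t with h | h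
        · exfalso; apply ha0; rw [← hta, h, zero_smul]
        · exact h
      have : H t = lam := by rw [hkey t, hta, hacard]
      calc lam = H t := this.symm
        _ ≤ _ := Finset.le_max' _ _ (Finset.mem_image.mpr ⟨t, Finset.mem_Ico.mpr ⟨ht1, hilt⟩, rfl⟩)
  refine ⟨hfirst, ?_⟩
  rw [hfirst]
  rw [eq_comm, Int.ceil_eq_iff]
  push_cast
  constructor <;> intro ⟨h1, h2⟩ <;> constructor <;> linarith
end

section
/- Let f be an (n, (n-1)/k, S) zero-difference function obtained by the change-point construction from a Type-A ZDB function (one fiber of size 1, others of size k, k ≥ 2, (n-1)/k ≥ 2), with average zero-difference value λ̄ = k - 1 + 2k/(n-1). If max S = k, then 0 ≤ max S - λ̄ < 1, and consequently the associated frequency-hopping sequence is optimal with respect to the Lempel–Greenberger bound. -/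
open Finset

theorem stmt15 {A B : Type*} [AddCommGroup A] [Fintype A] [DecidableEq A]
    [Fintype B] [DecidableEq B] (f : A → B)
    (α : A) (hgen : ∀ x : A, x ∈ AddSubgroup.zmultiples α)
    (n k m ε : ℕ) (hn : n = Fintype.card A) (hn2 : 2 ≤ n) (hk : 2 ≤ k)
    (hdvd : k ∣ n - 1) (hmdef : m = (n - 1) / k) (hm2 : 2 ≤ m)
    (hcard : (univ.image f).card = m) (hε : ε = n % m)
    (b0 : B) (hb0 : b0 ∈ univ.image f)
    (hfib0 : (univ.filter fun x => f x = b0).card = k + 1)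
    (hfib : ∀ b ∈ univ.image f, b ≠ b0 → (univ.filter fun x => f x = b).card = k)
    (hmax : ∀ a : A, a ≠ 0 → (univ.filter fun x => f (x + a) = f x).card ≤ k)
    (hmem : ∃ a : A, a ≠ 0 ∧ (univ.filter fun x => f (x + a) = f x).card = k)
    (lamBar : ℝ) (hlb : lamBar = (k : ℝ) - 1 + 2 * k / ((n : ℝ) - 1))
    (H : ℕ → ℕ)
    (hH : ∀ t, H t = ((Finset.range n).filter fun i =>
        f (i • α) = f (((i + t) % n) • α)).card)
    (HT : ℕ)
    (hHT : HT = ((Finset.Ico 1 n).image H).max'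
        ((Finset.nonempty_Ico.mpr (by omega)).image H))
    (C : ℝ) (hC : C = ((n : ℝ) - ε) * ((n : ℝ) + ε - m) / (m * ((n : ℝ) - 1))) :
    (0 ≤ (k : ℝ) - lamBar ∧ (k : ℝ) - lamBar < 1) ∧ (HT : ℤ) = ⌈C⌉ := by
  have hnm : n = m * k + 1 := by
    have h1 : m * k = n - 1 := by rw [hmdef]; exact Nat.div_mul_cancel hdvd
    omega
  have hε1 : ε = 1 := by
    have h2 : n % m = 1 := by
      rw [hnm, Nat.mul_add_mod]
      exact Nat.mod_eq_of_lt (by omega)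
    omega
  -- order of α is n
  have horder : addOrderOf α = n := by
    have htop : AddSubgroup.zmultiples α = ⊤ := by
      ext x; simpa using hgen x
    have h1 : Nat.card (AddSubgroup.zmultiples α) = addOrderOf α :=
      Nat.card_zmultiples α
    have h2 : Nat.card (AddSubgroup.zmultiples α) = Nat.card A := by
      rw [htop]
      exact Nat.card_congr AddSubgroup.topEquiv.toEquiv
    rw [← h1, h2, Nat.card_eq_fintype_card, hn]
  have hnpos : 0 < n := by omega
  have key : ∀ z : ℤ, ((z % (n : ℤ)).toNat) • α = z • α := by
    intro z
    have hnn : 0 ≤ z % (n : ℤ) := Int.emod_nonneg z (by exact_mod_cast hnpos.ne')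
    rw [← natCast_zsmul, Int.toNat_of_nonneg hnn, ← horder]
    exact mod_addOrderOf_zsmul α z
  -- key: H t counts x with f (x + t•α) = f x
  have hHeq : ∀ t : ℕ, H t = (univ.filter fun x => f (x + t • α) = f x).card := by
    intro t
    rw [hH t]
    have hmod : ∀ i : ℕ, ((i + t) % n) • α = i • α + t • α := by
      intro i
      rw [← horder, mod_addOrderOf_nsmul, add_nsmul]
    apply Finset.card_bij (fun i _ => i • α)
    · intro i hi
      simp only [mem_filter, mem_range] at hi ⊢
      refine ⟨mem_univ _, ?_⟩
      rw [← hmod]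
      exact hi.2.symm
    · intro i hi j hj hij
      simp only [mem_filter, mem_range] at hi hj
      have := nsmul_injOn_Iio_addOrderOf (x := α)
        (by simpa [horder] using hi.1) (by simpa [horder] using hj.1) hij
      exact this
    · intro x hx
      simp only [mem_filter, mem_univ, true_and] at hx
      obtain ⟨z, hz⟩ := AddSubgroup.mem_zmultiples_iff.mp (hgen x)
      have hlt : z % n < n := Int.emod_lt_of_pos z (by exact_mod_cast hnpos)
      have hnn : 0 ≤ z % n := Int.emod_nonneg z (by exact_mod_cast hnpos.ne')
      have hxeq : ((z % n).toNat) • α = x := by rw [key]; exact hz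
      refine ⟨(z % n).toNat, ?_, hxeq⟩
      simp only [mem_filter, mem_range]
      constructor
      · omega
      · rw [hmod, hxeq]
        exact hx.symm
  -- HT = k
  have hub : ∀ t ∈ Finset.Ico 1 n, H t ≤ k := by
    intro t ht
    rw [hHeq t]
    apply hmax
    intro h0
    have : addOrderOf α ∣ t := addOrderOf_dvd_iff_nsmul_eq_zero.mpr h0
    rw [horder] at this
    rw [Finset.mem_Ico] at ht
    have hle := Nat.le_of_dvd (by omega) this
    omega
  have hex : ∃ t ∈ Finset.Ico 1 n, H t = k := by
    obtain ⟨a, ha0, hak⟩ := hmem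
    obtain ⟨z, hz⟩ := AddSubgroup.mem_zmultiples_iff.mp (hgen a)
    have hnn : 0 ≤ z % n := Int.emod_nonneg z (by exact_mod_cast hnpos.ne')
    have hlt : z % n < n := Int.emod_lt_of_pos z (by exact_mod_cast hnpos)
    have haeq : ((z % n).toNat) • α = a := by rw [key]; exact hz
    refine ⟨(z % n).toNat, ?_, ?_⟩
    · rw [Finset.mem_Ico]
      constructor
      · rcases Nat.eq_zero_or_pos (z % n).toNat with h | h
        · exfalso; apply ha0; rw [← haeq, h, zero_nsmul]
        · omega
      · omega
    · rw [hHeq, haeq, hak]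
  have hHT : HT = k := by
    rw [hHT]
    apply le_antisymm
    · apply Finset.max'_le
      intro y hy
      obtain ⟨t, ht, rfl⟩ := Finset.mem_image.mp hy
      exact hub t ht
    · obtain ⟨t, ht, htk⟩ := hex
      exact Finset.le_max' _ k (Finset.mem_image.mpr ⟨t, ht, htk⟩)
  -- real arithmetic
  have hnR : (n : ℝ) = m * k + 1 := by rw [hnm]; push_cast; ring
  have hmR : (2 : ℝ) ≤ m := by exact_mod_cast hm2
  have hkR : (2 : ℝ) ≤ k := by exact_mod_cast hk
  have hden : (0 : ℝ) < (n : ℝ) - 1 := by rw [hnR]; nlinarith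
  constructor
  · constructor
    · rw [hlb]
      have : 2 * (k : ℝ) / ((n : ℝ) - 1) ≤ 1 := by
        rw [div_le_one hden, hnR]; nlinarith
      linarith
    · rw [hlb]
      have : 0 < 2 * (k : ℝ) / ((n : ℝ) - 1) := by positivity
      linarith
  · rw [hHT]
    symm
    rw [Int.ceil_eq_iff]
    · rw [hC, hε1]
      push_cast
      have hden2 : (0 : ℝ) < (m : ℝ) * ((n : ℝ) - 1) := by
        apply mul_pos (by linarith) hden
      constructor
      · rw [lt_div_iff₀ hden2]
        push_cast
        rw [hnR]
        nlinarith
      · rw [div_le_iff₀ hden2]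
        push_cast
        rw [hnR]
        nlinarith
end

section
/- Let f be an (n, (n-1)/k, λ, μ) function with fibers of sizes: one of size k+1 and (n-1)/k - 1 of size k (k ≥ 2), arising as a change-point modification of a ZDB function, and suppose every zero-difference count is at most k (i.e., max S = k). Then the DSS formed by the fibers of f, which has parameters (n, [k+1, k, ..., k], n - k), is optimal: it meets the bound n ≥ √SQUARE((n-k)(n-1) + ⌈(n-k)(n-1)/((n-1)/k - 1)⌉). -/
set_option maxHeartbeats 1000000

open Finset

theorem stmt16 {A B : Type*} [AddCommGroup A] [Fintype A] [DecidableEq A]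
    [Fintype B] [DecidableEq B] (f : A → B)
    (n k m : ℕ) (hn : n = Fintype.card A) (hn2 : 2 ≤ n) (hk : 2 ≤ k)
    (hdvd : k ∣ n - 1) (hmdef : m = (n - 1) / k) (hm2 : 2 ≤ m)
    (hcard : (univ.image f).card = m)
    (b0 : B) (hb0 : b0 ∈ univ.image f)
    (hfib0 : (univ.filter fun x => f x = b0).card = k + 1)
    (hfib : ∀ b ∈ univ.image f, b ≠ b0 → (univ.filter fun x => f x = b).card = k)
    (hmax : ∀ a : A, a ≠ 0 → (univ.filter fun x => f (x + a) = f x).card ≤ k)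
    (hmem : ∃ a : A, a ≠ 0 ∧ (univ.filter fun x => f (x + a) = f x).card = k)
    (T : ℕ)
    (hT : T = (n - k) * (n - 1)
        + (⌈((n : ℚ) - k) * ((n : ℚ) - 1) / ((m : ℚ) - 1)⌉).toNat) :
    Nat.sqrt (squareAbove T) = n := by
  clear hcard hb0 hfib0 hfib hmax hmem hn
  obtain ⟨p, rfl⟩ : ∃ p, m = p + 1 := ⟨m - 1, by omega⟩
  have hp : 1 ≤ p := by omega
  have h1 : (p + 1) * k = n - 1 := by rw [hmdef]; exact Nat.div_mul_cancel hdvd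
  have h1' : p * k + k = n - 1 := by rw [← h1]; ring
  set q := p * k with hq
  have hn' : n = q + k + 1 := by omega
  -- rational facts
  have hpQ : (0:ℚ) < (p:ℚ) := by exact_mod_cast hp
  have hkQ : (2:ℚ) ≤ (k:ℚ) := by exact_mod_cast hk
  have hpQ1 : (1:ℚ) ≤ (p:ℚ) := by exact_mod_cast hp
  have hqQ : (q:ℚ) = (p:ℚ) * k := by exact_mod_cast hq
  have hnQ : (n:ℚ) = (q:ℚ) + k + 1 := by exact_mod_cast hn'
  set X : ℚ := ((n : ℚ) - k) * ((n : ℚ) - 1) / ((↑(p+1) : ℚ) - 1) with hX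
  have hXval : X = (((p:ℚ)*k + 1) * (((p:ℚ)+1)*k)) / (p:ℚ) := by
    rw [hX, hnQ, hqQ]; push_cast; ring_nf
  have clow : ((p:ℤ)+1) * k * ((k:ℤ)-1) < ⌈X⌉ := by
    rw [Int.lt_ceil, hXval, lt_div_iff₀ hpQ]
    push_cast
    nlinarith [hpQ, hkQ]
  have cup : ⌈X⌉ ≤ ((p:ℤ)+1) * k^2 + 2*k := by
    rw [Int.ceil_le, hXval, div_le_iff₀ hpQ]
    push_cast
    nlinarith [hpQ1, hkQ]
  have cpos : 0 < ⌈X⌉ := by nlinarith [clow, (by exact_mod_cast hp : (1:ℤ) ≤ (p:ℤ)), (by exact_mod_cast hk : (2:ℤ) ≤ (k:ℤ))]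
  set C := (⌈X⌉).toNat with hCdef
  have hCZ : (C:ℤ) = ⌈X⌉ := Int.toNat_of_nonneg cpos.le
  have hTval : T = (q + 1) * (q + k) + C := by
    rw [hT]
    congr 1
    · congr 1 <;> omega
  have hqZ : (q:ℤ) = (p:ℤ) * k := by exact_mod_cast hq
  have hkZ : (2:ℤ) ≤ (k:ℤ) := by exact_mod_cast hk
  have hpZ : (1:ℤ) ≤ (p:ℤ) := by exact_mod_cast hp
  -- key bounds on T
  have hlow : (q + k)^2 < T := by
    have : ((q:ℤ) + k)^2 < (q + 1) * (q + k) + C := by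
      rw [hCZ]; nlinarith [clow, hqZ, hpZ, hkZ]
    have h2 : ((q + k)^2 : ℤ) < ((q + 1) * (q + k) + C : ℕ) := by push_cast; push_cast at this; linarith
    rw [hTval]; exact_mod_cast h2
  have hhigh : T < (q + k + 1)^2 := by
    have : ((q:ℤ) + 1) * (q + k) + C < ((q:ℤ) + k + 1)^2 := by
      rw [hCZ, hqZ]
      have hpk : (k:ℤ) ≤ (p:ℤ)*k := le_mul_of_one_le_left (by linarith) hpZ
      nlinarith [cup, hpk]
    have h2 : (((q + 1) * (q + k) + C : ℕ) : ℤ) < ((q + k + 1)^2 : ℤ) := by push_cast; push_cast at this; linarith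
    rw [hTval]; exact_mod_cast h2
  have hT0 : T ≠ 0 := by omega
  have hsq : Nat.sqrt (T - 1) = q + k := by
    have ha : Nat.sqrt (T - 1) < q + k + 1 := Nat.sqrt_lt'.mpr (by omega)
    have hb : q + k ≤ Nat.sqrt (T - 1) := Nat.le_sqrt'.mpr (by omega)
    omega
  rw [squareAbove, if_neg hT0, hsq, Nat.sqrt_eq', hn']
end
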